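/- arXiv:2008.00470 — 3 statements merged into one kernel-verified Lean document; each statement's English description precedes it below -/
import Mathlib

section
/- Let β₋ < β₊ be real numbers, D = (β₋, β₊), and let σ, η, γ, λ > 0 be constants. Suppose b : D → ℝ is bounded, twice continuously differentiable, and Lipschitz continuous, and let V : D → ℝ be a twice continuously differentiable solution of the reduced HJB equation (1/2)σ²V''(x) + b(x)V'(x) − λV(x) − (γV'(x) + 1)²/(4η) = 0 on D with V(x) → +∞ as x approaches either endpoint of D from inside. Then V blows up at the boundary like the logarithmic distance to the boundary: lim_{ε↓0} V(β₋ + ε)/(−log ε) = 2σ²η/γ² and lim_{ε↓0} V(β₊ − ε)/(−log ε) = 2σ²η/γ². -/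
/-!
With `a = 2σ²η/γ²` the logarithmic (Cole–Hopf) substitution `u = exp (-(V + s x / γ) / a)`
cancels the quadratic term of the HJB equation, leaving the linear equation
`u'' = p u' + q u` with `p = -2b/σ²` bounded and `q = 2/(σ²a) · (-s b/γ - λ V)`.
Near the endpoint `β` we have `u → 0`, `q ≤ 0` and `q u → 0` (because `u log u → 0`), so
`(u' e^{-∫p})' = q u e^{-∫p}` is bounded and nonpositive: `u'` has a limit `L`, and `L < 0`
because `u' e^{-∫p}` is nonincreasing and `u' < 0` somewhere near `β` (as `0 < u → 0`).
By l'Hôpital `u(β - ε) ~ -L ε`, hence `V(β - ε) = -a log u(β - ε) + O(1) = -a log ε + O(1)`.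
The left endpoint is the right one for `x ↦ V(-x)`, which solves the same equation with
`b(x)`, `s` replaced by `-b(-x)`, `-s`.
-/

open Set Filter Topology

lemma tendsto_const_sub_nhdsGT_zero (β : ℝ) : Tendsto (fun ε => β - ε) (𝓝[>] 0) (𝓝[<] β) :=
  tendsto_nhdsWithin_iff.2
    ⟨(by simpa using ((continuous_sub_left β).tendsto 0).mono_left nhdsWithin_le_nhds),
      eventually_nhdsWithin_of_forall fun _ hε => sub_lt_self β hε⟩

lemma exists_tendsto_nhdsLT_of_hasDerivAt_of_abs_le {f f' : ℝ → ℝ} {β M : ℝ}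
    (hf : ∀ᶠ x in 𝓝[<] β, HasDerivAt f (f' x) x) (hM : ∀ᶠ x in 𝓝[<] β, |f' x| ≤ M) :
    ∃ L, Tendsto f (𝓝[<] β) (𝓝 L) := by
  obtain ⟨l, hl, hsub⟩ := mem_nhdsLT_iff_exists_Ioo_subset.1 (hf.and hM)
  have hlip : LipschitzOnWith M.toNNReal f (Ioo l β) :=
    (convex_Ioo l β).lipschitzOnWith_of_nnnorm_hasDerivWithin_le
      (fun x hx => (hsub hx).1.hasDerivWithinAt) fun x hx => by
        rw [← NNReal.coe_le_coe, coe_nnnorm]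
        exact (hsub hx).2.trans (le_max_left _ _)
  obtain ⟨g, hg, hfg⟩ := hlip.extend_real
  refine ⟨g β, (hg.continuous.tendsto β |>.mono_left nhdsWithin_le_nhds).congr' ?_⟩
  filter_upwards [Ioo_mem_nhdsLT hl] with x hx using (hfg hx).symm

lemma exists_hasDerivAt_of_continuousOn_Ioo {p : ℝ → ℝ} {α β : ℝ} (hαβ : α < β)
    (hp : ContinuousOn p (Ioo α β)) : ∃ B : ℝ → ℝ, ∀ x ∈ Ioo α β, HasDerivAt B (p x) x := by
  obtain ⟨x₀, hx₀⟩ := nonempty_Ioo.2 hαβ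
  refine ⟨fun x => ∫ t in x₀..x, p t, fun x hx => ?_⟩
  exact intervalIntegral.integral_hasDerivAt_right
    ((hp.mono (ordConnected_Ioo.uIcc_subset hx₀ hx)).intervalIntegrable)
    (hp.stronglyMeasurableAtFilter isOpen_Ioo x hx) (hp.continuousAt (isOpen_Ioo.mem_nhds hx))

lemma exists_hasDerivAt_neg_of_tendsto_nhdsLT_zero {u u' : ℝ → ℝ} {x₀ β : ℝ} (hx₀ : x₀ < β)
    (hu : ∀ x ∈ Ioo x₀ β, HasDerivAt u (u' x) x) (hpos : ∀ x ∈ Ioo x₀ β, 0 < u x)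
    (h0 : Tendsto u (𝓝[<] β) (𝓝 0)) : ∃ c ∈ Ioo x₀ β, u' c < 0 := by
  obtain ⟨x₁, hx₁⟩ := nonempty_Ioo.2 hx₀
  obtain ⟨x₂, hx₂u, hx₂⟩ : ∃ x₂, u x₂ < u x₁ ∧ x₂ ∈ Ioo x₁ β :=
    ((h0.eventually (gt_mem_nhds (hpos x₁ hx₁))).and (Ioo_mem_nhdsLT hx₁.2)).exists
  have hsub : Icc x₁ x₂ ⊆ Ioo x₀ β := Icc_subset_Ioo hx₁.1 hx₂.2
  obtain ⟨c, hc, hslope⟩ := exists_hasDerivAt_eq_slope u u' hx₂.1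
    (fun x hx => (hu x (hsub hx)).continuousAt.continuousWithinAt)
    (fun x hx => hu x (hsub (Ioo_subset_Icc_self hx)))
  refine ⟨c, hsub (Ioo_subset_Icc_self hc), ?_⟩
  rw [hslope]
  exact div_neg_of_neg_of_pos (sub_neg.2 hx₂u) (sub_pos.2 hx₂.1)

lemma tendsto_div_const_sub_of_tendsto_deriv {f f' : ℝ → ℝ} {x₀ β L : ℝ} (hx₀ : x₀ < β)
    (hf : ∀ x ∈ Ioo x₀ β, HasDerivAt f (f' x) x) (h0 : Tendsto f (𝓝[<] β) (𝓝 0))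
    (hL : Tendsto f' (𝓝[<] β) (𝓝 L)) :
    Tendsto (fun x => f x / (β - x)) (𝓝[<] β) (𝓝 (-L)) := by
  refine HasDerivAt.lhopital_zero_left_on_Ioo hx₀ hf
    (fun x _ => by simpa using (hasDerivAt_id x).const_sub β) (fun _ _ => by norm_num) h0 ?_
    (by simpa [div_neg] using hL.neg)
  simpa using ((continuous_sub_left β).tendsto β).mono_left (nhdsWithin_le_nhds (s := Iio β))

lemma tendsto_log_div_log_of_tendsto_div {g : ℝ → ℝ} {c : ℝ} (hc : 0 < c)
    (hg : Tendsto (fun ε => g ε / ε) (𝓝[>] 0) (𝓝 c)) :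
    Tendsto (fun ε => Real.log (g ε) / Real.log ε) (𝓝[>] 0) (𝓝 1) := by
  have hlog : Tendsto (fun ε => Real.log (g ε / ε) * (Real.log ε)⁻¹ + 1) (𝓝[>] 0)
      (𝓝 (Real.log c * 0 + 1)) :=
    (((Real.continuousAt_log hc.ne').tendsto.comp hg).mul
      Real.tendsto_log_nhdsGT_zero.inv_tendsto_atBot).add_const 1
  rw [mul_zero, zero_add] at hlog
  refine hlog.congr' ?_
  filter_upwards [hg.eventually (lt_mem_nhds hc), self_mem_nhdsWithin,
    Ioo_mem_nhdsGT zero_lt_one] with ε hgε (hε : 0 < ε) hε1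
  have hlogε : Real.log ε ≠ 0 := (Real.log_neg hε hε1.2).ne
  have hgpos : 0 < g ε := by simpa [div_pos_iff, hε, hε.not_gt] using hgε
  rw [Real.log_div hgpos.ne' hε.ne']
  field_simp
  ring

lemma le_of_tendsto_nhdsLT_of_hasDerivAt_nonpos {f f' : ℝ → ℝ} {c β L : ℝ} (hc : c < β)
    (hf : ∀ x ∈ Ico c β, HasDerivAt f (f' x) x) (hf' : ∀ x ∈ Ioo c β, f' x ≤ 0)
    (hL : Tendsto f (𝓝[<] β) (𝓝 L)) : L ≤ f c := by
  have hanti : AntitoneOn f (Ico c β) := by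
    refine antitoneOn_of_hasDerivWithinAt_nonpos (f' := f') (convex_Ico c β)
      (fun x hx => (hf x hx).continuousAt.continuousWithinAt) (fun x hx => ?_) ?_
    · rw [interior_Ico] at hx ⊢
      exact (hf x (Ioo_subset_Ico_self hx)).hasDerivWithinAt
    · rwa [interior_Ico]
  refine le_of_tendsto hL ?_
  filter_upwards [Ioo_mem_nhdsLT hc] with x hx
  exact hanti ⟨le_rfl, hc⟩ (Ioo_subset_Ico_self hx) hx.1.le

theorem exists_neg_tendsto_deriv_of_linear_ode {u u₁ p q : ℝ → ℝ} {x₀ β M K : ℝ}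
    (hx₀ : x₀ < β) (hu : ∀ x ∈ Ioo x₀ β, HasDerivAt u (u₁ x) x)
    (hu₁ : ∀ x ∈ Ioo x₀ β, HasDerivAt u₁ (p x * u₁ x + q x * u x) x)
    (hp : ContinuousOn p (Ioo x₀ β)) (hpM : ∀ x ∈ Ioo x₀ β, |p x| ≤ M)
    (hq : ∀ᶠ x in 𝓝[<] β, q x ≤ 0) (hqu : ∀ᶠ x in 𝓝[<] β, |q x * u x| ≤ K)
    (hpos : ∀ x ∈ Ioo x₀ β, 0 < u x) (hu0 : Tendsto u (𝓝[<] β) (𝓝 0)) :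
    ∃ L < 0, Tendsto u₁ (𝓝[<] β) (𝓝 L) := by
  have hI : ∀ᶠ x in 𝓝[<] β, x ∈ Ioo x₀ β := Ioo_mem_nhdsLT hx₀
  obtain ⟨B, hB⟩ := exists_hasDerivAt_of_continuousOn_Ioo hx₀ hp
  obtain ⟨LB, hLB⟩ := exists_tendsto_nhdsLT_of_hasDerivAt_of_abs_le
    (hI.mono fun x hx => hB x hx) (hI.mono fun x hx => hpM x hx)
  set φ : ℝ → ℝ := fun x => u₁ x * Real.exp (-B x)
  have hφ : ∀ x ∈ Ioo x₀ β, HasDerivAt φ (q x * u x * Real.exp (-B x)) x := fun x hx =>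
    ((hu₁ x hx).fun_mul (hB x hx).fun_neg.exp).congr_deriv (by ring)
  have hexpB : Tendsto (fun x => Real.exp (-B x)) (𝓝[<] β) (𝓝 (Real.exp (-LB))) :=
    (Real.continuous_exp.tendsto _).comp hLB.neg
  obtain ⟨Lφ, hLφ⟩ := exists_tendsto_nhdsLT_of_hasDerivAt_of_abs_le (f := φ)
    (hI.mono fun x hx => hφ x hx) (M := K * (Real.exp (-LB) + 1)) <| by
    filter_upwards [hqu, hexpB.eventually (gt_mem_nhds (lt_add_one _))] with x hx hx'
    rw [abs_mul, abs_of_pos (Real.exp_pos _)]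
    exact mul_le_mul hx hx'.le (Real.exp_pos _).le ((abs_nonneg _).trans hx)
  have hu₁φ : Tendsto u₁ (𝓝[<] β) (𝓝 (Lφ * Real.exp LB)) := by
    refine (hLφ.mul ((Real.continuous_exp.tendsto _).comp hLB)).congr fun x => ?_
    simp [φ, mul_assoc, ← Real.exp_add]
  refine ⟨_, mul_neg_of_neg_of_pos ?_ (Real.exp_pos _), hu₁φ⟩
  obtain ⟨x₁, hx₁, hx₁q⟩ := (mem_nhdsLT_iff_exists_Ioo_subset' hx₀).1 hq
  have hsub : Ioo (max x₁ x₀) β ⊆ Ioo x₀ β := Ioo_subset_Ioo_left (le_max_right _ _)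
  obtain ⟨c, hc, hc'⟩ := exists_hasDerivAt_neg_of_tendsto_nhdsLT_zero (max_lt hx₁ hx₀)
    (fun x hx => hu x (hsub hx)) (fun x hx => hpos x (hsub hx)) hu0
  have hφc : Lφ ≤ φ c := by
    refine le_of_tendsto_nhdsLT_of_hasDerivAt_nonpos hc.2
      (fun x hx => hφ x ⟨(hsub hc).1.trans_le hx.1, hx.2⟩) (fun x hx => ?_) hLφ
    have hxq : q x ≤ 0 := hx₁q ⟨(le_max_left _ _).trans_lt (hc.1.trans hx.1), hx.2⟩
    have hxu : 0 < u x := hpos x ⟨(hsub hc).1.trans hx.1, hx.2⟩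
    exact mul_nonpos_of_nonpos_of_nonneg (mul_nonpos_of_nonpos_of_nonneg hxq hxu.le)
      (Real.exp_pos _).le
  exact hφc.trans_lt (mul_neg_of_neg_of_pos hc' (Real.exp_pos _))

lemma ContDiffOn.hasDerivAt_deriv {f : ℝ → ℝ} {s : Set ℝ} {n : WithTop ℕ∞} {x : ℝ}
    (hf : ContDiffOn ℝ n f s) (hs : IsOpen s) (hn : n ≠ 0) (hx : x ∈ s) :
    HasDerivAt f (deriv f x) x :=
  ((hf.differentiableOn hn x hx).differentiableAt (hs.mem_nhds hx)).hasDerivAt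

noncomputable def coleHopf (a c : ℝ) (V : ℝ → ℝ) (x : ℝ) : ℝ := Real.exp (-(V x + c * x) / a)

lemma coleHopf_pos (a c : ℝ) (V : ℝ → ℝ) (x : ℝ) : 0 < coleHopf a c V x := Real.exp_pos _

lemma log_coleHopf {a : ℝ} (ha : a ≠ 0) (c : ℝ) (V : ℝ → ℝ) (x : ℝ) :
    a * Real.log (coleHopf a c V x) = -(V x + c * x) := by
  rw [coleHopf, Real.log_exp]
  field_simp

lemma hasDerivAt_coleHopf {a c v x : ℝ} {V : ℝ → ℝ} (hV : HasDerivAt V v x) :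
    HasDerivAt (coleHopf a c V) (-(coleHopf a c V x * (v + c)) / a) x := by
  have := ((hV.fun_add ((hasDerivAt_id x).const_mul c)).fun_neg.div_const a).exp
  exact this.congr_deriv (by simp only [coleHopf, id, mul_one]; ring)

lemma tendsto_coleHopf_zero {a c : ℝ} {V : ℝ → ℝ} {β : ℝ} (ha : 0 < a)
    (hV : Tendsto V (𝓝[<] β) atTop) : Tendsto (coleHopf a c V) (𝓝[<] β) (𝓝 0) := by
  refine Real.tendsto_exp_atBot.comp (Tendsto.atBot_div_const ha ?_)
  refine tendsto_neg_atTop_atBot.comp (hV.atTop_add (C := c * β) ?_)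
  exact ((continuous_const_mul c).tendsto β).mono_left nhdsWithin_le_nhds

lemma hasDerivAt_coleHopf_deriv_of_hjb {σ η γ lam s a x : ℝ} {b V V₁ V₂ : ℝ → ℝ}
    (hσ : σ ≠ 0) (hη : η ≠ 0) (hγ : γ ≠ 0) (ha : a = 2 * σ ^ 2 * η / γ ^ 2)
    (hV : HasDerivAt V (V₁ x) x) (hV₁ : HasDerivAt V₁ (V₂ x) x)
    (hhjb : (1/2) * σ^2 * V₂ x + b x * V₁ x - lam * V x - (γ * V₁ x + s)^2 / (4*η) = 0) :
    HasDerivAt (fun y => -(coleHopf a (s / γ) V y * (V₁ y + s / γ)) / a)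
      (-(2 * b x / σ ^ 2) * (-(coleHopf a (s / γ) V x * (V₁ x + s / γ)) / a)
        + 2 / (σ ^ 2 * a) * (-(b x * (s / γ)) - lam * V x) * coleHopf a (s / γ) V x) x := by
  have ha₀ : a ≠ 0 := by rw [ha]; positivity
  have hV₂ : V₂ x = 2 / σ ^ 2 * (lam * V x - b x * V₁ x) + (V₁ x + s / γ) ^ 2 / a := by
    rw [ha]
    field_simp at hhjb ⊢
    linear_combination hhjb / 2
  refine (((hasDerivAt_coleHopf hV).fun_mul (hV₁.add_const (s / γ))).fun_neg.div_const a
    ).congr_deriv ?_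
  rw [hV₂]
  field_simp
  ring

lemma tendsto_neg_mul_sub_mul_atBot {α : Type*} {l : Filter α} {b V : α → ℝ} (c : ℝ) {lam C : ℝ}
    (hlam : 0 < lam) (hbC : ∀ᶠ x in l, |b x| ≤ C) (hV : Tendsto V l atTop) :
    Tendsto (fun x => -(b x * c) - lam * V x) l atBot := by
  simp only [sub_eq_add_neg]
  refine tendsto_atBot_add_left_of_ge' l (C * |c|) ?_
    (tendsto_neg_atTop_atBot.comp (hV.const_mul_atTop hlam))
  filter_upwards [hbC] with x hx
  calc -(b x * c) ≤ |b x * c| := neg_le_abs _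
    _ = |b x| * |c| := abs_mul _ _
    _ ≤ C * |c| := mul_le_mul_of_nonneg_right hx (abs_nonneg c)

lemma tendsto_neg_mul_sub_mul_coleHopf_zero (c lam : ℝ) {a C β : ℝ} {b V : ℝ → ℝ} (ha : 0 < a)
    (hbC : ∀ᶠ x in 𝓝[<] β, |b x| ≤ C) (hV : Tendsto V (𝓝[<] β) atTop) :
    Tendsto (fun x => (-(b x * c) - lam * V x) * coleHopf a c V x) (𝓝[<] β) (𝓝 0) := by
  set u := coleHopf a c V
  have hu0 : Tendsto u (𝓝[<] β) (𝓝 0) := tendsto_coleHopf_zero ha hV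
  have hulogu : Tendsto (fun x => u x * Real.log (u x)) (𝓝[<] β) (𝓝 0) := by
    simpa [Function.comp_def] using (Real.continuous_mul_log.tendsto 0).comp hu0
  have hux : Tendsto (fun x => u x * x) (𝓝[<] β) (𝓝 0) := by
    simpa using hu0.mul (tendsto_id'.2 nhdsWithin_le_nhds)
  have hub : Tendsto (fun x => u x * b x) (𝓝[<] β) (𝓝 0) :=
    hu0.zero_mul_isBoundedUnder_le (isBoundedUnder_of_eventually_le (a := C) hbC)
  have hsum := ((hulogu.const_mul (lam * a)).add (hux.const_mul (lam * c))).sub (hub.const_mul c)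
  simp only [mul_zero, add_zero, sub_zero] at hsum
  refine hsum.congr fun x => ?_
  have hlog := log_coleHopf ha.ne' c V x
  linear_combination lam * u x * hlog

lemma tendsto_div_neg_log_of_tendsto_coleHopf_div {a c k β : ℝ} {V : ℝ → ℝ} (ha : a ≠ 0)
    (hk : 0 < k) (h : Tendsto (fun ε => coleHopf a c V (β - ε) / ε) (𝓝[>] 0) (𝓝 k)) :
    Tendsto (fun ε => V (β - ε) / (-Real.log ε)) (𝓝[>] 0) (𝓝 a) := by
  have hlin : Tendsto (fun ε => c * (β - ε)) (𝓝[>] 0) (𝓝 (c * (β - 0))) :=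
    ((continuous_const.mul (continuous_sub_left β)).tendsto 0).mono_left nhdsWithin_le_nhds
  have hsum := ((tendsto_log_div_log_of_tendsto_div hk h).const_mul a).add
    (hlin.mul Real.tendsto_log_nhdsGT_zero.inv_tendsto_atBot)
  rw [mul_zero, add_zero, mul_one] at hsum
  refine hsum.congr' ?_
  filter_upwards [Ioo_mem_nhdsGT zero_lt_one] with ε hε
  have hlogε : Real.log ε ≠ 0 := (Real.log_neg hε.1 hε.2).ne
  have hV : V (β - ε) = -(a * Real.log (coleHopf a c V (β - ε))) - c * (β - ε) := by
    linear_combination log_coleHopf ha c V (β - ε)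
  rw [hV, Pi.inv_apply]
  field_simp
  ring

section HJB

variable {σ η γ lam s C : ℝ} {b V V₁ V₂ : ℝ → ℝ}

theorem tendsto_div_neg_log_of_hjb_nhdsLT {x₀ β : ℝ} (hx₀ : x₀ < β)
    (hσ : 0 < σ) (hη : 0 < η) (hγ : 0 < γ) (hlam : 0 < lam)
    (hb : ContinuousOn b (Ioo x₀ β)) (hbC : ∀ x ∈ Ioo x₀ β, |b x| ≤ C)
    (hV : ∀ x ∈ Ioo x₀ β, HasDerivAt V (V₁ x) x)
    (hV₁ : ∀ x ∈ Ioo x₀ β, HasDerivAt V₁ (V₂ x) x)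
    (hhjb : ∀ x ∈ Ioo x₀ β,
      (1/2) * σ^2 * V₂ x + b x * V₁ x - lam * V x - (γ * V₁ x + s)^2 / (4*η) = 0)
    (hVβ : Tendsto V (𝓝[<] β) atTop) :
    Tendsto (fun ε => V (β - ε) / (-Real.log ε)) (𝓝[>] 0) (𝓝 (2*σ^2*η/γ^2)) := by
  obtain ⟨a, ha⟩ : ∃ a, a = 2 * σ ^ 2 * η / γ ^ 2 := ⟨_, rfl⟩
  rw [← ha]
  have ha₀ : 0 < a := by rw [ha]; positivity
  have hk : 0 < 2 / (σ ^ 2 * a) := by positivity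
  have hbC' : ∀ᶠ x in 𝓝[<] β, |b x| ≤ C := eventually_of_mem (Ioo_mem_nhdsLT hx₀) hbC
  have hp : ∀ x ∈ Ioo x₀ β, |-(2 * b x / σ ^ 2)| ≤ 2 * C / σ ^ 2 := fun x hx => by
    rw [abs_neg, abs_div, abs_mul, abs_two, abs_of_pos (by positivity : 0 < σ ^ 2)]
    gcongr
    exact hbC x hx
  have hq : ∀ᶠ x in 𝓝[<] β, 2 / (σ ^ 2 * a) * (-(b x * (s / γ)) - lam * V x) ≤ 0 :=
    ((tendsto_neg_mul_sub_mul_atBot (s / γ) hlam hbC' hVβ).eventually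
      (eventually_le_atBot 0)).mono fun _ hx => mul_nonpos_of_nonneg_of_nonpos hk.le hx
  have hqu : ∀ᶠ x in 𝓝[<] β,
      |2 / (σ ^ 2 * a) * (-(b x * (s / γ)) - lam * V x) * coleHopf a (s / γ) V x| ≤ 1 := by
    have h := (tendsto_neg_mul_sub_mul_coleHopf_zero (s / γ) lam ha₀ hbC' hVβ).const_mul
      (2 / (σ ^ 2 * a))
    rw [mul_zero] at h
    filter_upwards [h.eventually (eventually_abs_sub_lt 0 one_pos)] with x hx
    simpa [mul_assoc] using hx.le
  obtain ⟨L, hL, hu₁L⟩ := exists_neg_tendsto_deriv_of_linear_ode hx₀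
    (fun x hx => hasDerivAt_coleHopf (hV x hx))
    (fun x hx => hasDerivAt_coleHopf_deriv_of_hjb hσ.ne' hη.ne' hγ.ne' ha (hV x hx) (hV₁ x hx)
      (hhjb x hx))
    (by fun_prop) hp hq hqu (fun x _ => coleHopf_pos _ _ _ x) (tendsto_coleHopf_zero ha₀ hVβ)
  have hslope := (tendsto_div_const_sub_of_tendsto_deriv hx₀
    (fun x hx => hasDerivAt_coleHopf (hV x hx)) (tendsto_coleHopf_zero ha₀ hVβ) hu₁L).comp
    (tendsto_const_sub_nhdsGT_zero β)
  simp only [Function.comp_def, sub_sub_cancel] at hslope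
  exact tendsto_div_neg_log_of_tendsto_coleHopf_div ha₀.ne' (neg_pos.2 hL) hslope

theorem tendsto_div_neg_log_of_hjb_nhdsGT {α x₀ : ℝ} (hx₀ : α < x₀)
    (hσ : 0 < σ) (hη : 0 < η) (hγ : 0 < γ) (hlam : 0 < lam)
    (hb : ContinuousOn b (Ioo α x₀)) (hbC : ∀ x ∈ Ioo α x₀, |b x| ≤ C)
    (hV : ∀ x ∈ Ioo α x₀, HasDerivAt V (V₁ x) x)
    (hV₁ : ∀ x ∈ Ioo α x₀, HasDerivAt V₁ (V₂ x) x)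
    (hhjb : ∀ x ∈ Ioo α x₀,
      (1/2) * σ^2 * V₂ x + b x * V₁ x - lam * V x - (γ * V₁ x + s)^2 / (4*η) = 0)
    (hVα : Tendsto V (𝓝[>] α) atTop) :
    Tendsto (fun ε => V (α + ε) / (-Real.log ε)) (𝓝[>] 0) (𝓝 (2*σ^2*η/γ^2)) := by
  have hmem : ∀ x ∈ Ioo (-x₀) (-α), -x ∈ Ioo α x₀ := fun _ hx =>
    ⟨lt_neg_of_lt_neg hx.2, neg_lt.1 hx.1⟩
  have h := tendsto_div_neg_log_of_hjb_nhdsLT (neg_lt_neg hx₀) hσ hη hγ hlam (s := -s)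
    (b := fun x => -b (-x)) (V := fun x => V (-x)) (V₁ := fun x => -V₁ (-x))
    (V₂ := fun x => V₂ (-x))
    ((hb.comp continuousOn_neg hmem).neg) (fun x hx => by simpa using hbC _ (hmem x hx))
    (fun x hx => ((hV _ (hmem x hx)).comp x (hasDerivAt_neg x)).congr_deriv (by ring))
    (fun x hx => ((hV₁ _ (hmem x hx)).comp x (hasDerivAt_neg x)).neg.congr_deriv (by ring))
    (fun x hx => by linear_combination hhjb _ (hmem x hx))
    (hVα.comp (by simpa using tendsto_neg_nhdsLT_neg (a := α)))
  simpa [sub_eq_add_neg, add_comm] using h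

end HJB

theorem hjb_log_blowup_general (βm βp σ η γ lam : ℝ) (hβ : βm < βp)
    (hσ : 0 < σ) (hη : 0 < η) (hγ : 0 < γ) (hlam : 0 < lam)
    (b : ℝ → ℝ)
    (hb_bdd : ∃ C : ℝ, ∀ x ∈ Ioo βm βp, |b x| ≤ C)
    (hb_smooth : ContDiffOn ℝ 2 b (Ioo βm βp))
    (V : ℝ → ℝ)
    (hV_smooth : ContDiffOn ℝ 2 V (Ioo βm βp))
    (hV_hjb : ∀ x ∈ Ioo βm βp,
      (1/2) * σ^2 * deriv (deriv V) x + b x * deriv V x - lam * V x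
        - (γ * deriv V x + 1)^2 / (4*η) = 0)
    (hV_bm : Tendsto V (𝓝[>] βm) atTop) (hV_bp : Tendsto V (𝓝[<] βp) atTop) :
    Tendsto (fun ε : ℝ => V (βm + ε) / (-Real.log ε)) (𝓝[>] (0:ℝ))
      (𝓝 (2*σ^2*η/γ^2)) ∧
    Tendsto (fun ε : ℝ => V (βp - ε) / (-Real.log ε)) (𝓝[>] (0:ℝ))
      (𝓝 (2*σ^2*η/γ^2)) := by
  obtain ⟨C, hC⟩ := hb_bdd
  have hV : ∀ x ∈ Ioo βm βp, HasDerivAt V (deriv V x) x := fun _ hx =>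
    hV_smooth.hasDerivAt_deriv isOpen_Ioo (by norm_num) hx
  have hV₁ : ∀ x ∈ Ioo βm βp, HasDerivAt (deriv V) (deriv (deriv V) x) x := fun _ hx =>
    (hV_smooth.deriv_of_isOpen isOpen_Ioo (m := 1) (by norm_num)).hasDerivAt_deriv isOpen_Ioo
      one_ne_zero hx
  have hb := hb_smooth.continuousOn
  exact ⟨tendsto_div_neg_log_of_hjb_nhdsGT hβ hσ hη hγ hlam hb hC hV hV₁ hV_hjb hV_bm,
    tendsto_div_neg_log_of_hjb_nhdsLT hβ hσ hη hγ hlam hb hC hV hV₁ hV_hjb hV_bp⟩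

/-- The solution of the singular boundary value problem for the reduced HJB equation
blows up at the boundary like the logarithmic distance to the boundary:
`lim_{ε↓0} V(β₋+ε)/(−log ε) = 2σ²η/γ² = lim_{ε↓0} V(β₊−ε)/(−log ε)`. -/
theorem hjb_log_blowup (βm βp σ η γ lam : ℝ) (hβ : βm < βp)
    (hσ : 0 < σ) (hη : 0 < η) (hγ : 0 < γ) (hlam : 0 < lam)
    (b : ℝ → ℝ)
    (hb_bdd : ∃ C : ℝ, ∀ x ∈ Ioo βm βp, |b x| ≤ C)
    (hb_smooth : ContDiffOn ℝ 2 b (Ioo βm βp))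
    (hb_lip : ∃ K : NNReal, LipschitzOnWith K b (Ioo βm βp))
    (V : ℝ → ℝ)
    (hV_smooth : ContDiffOn ℝ 2 V (Ioo βm βp))
    (hV_hjb : ∀ x ∈ Ioo βm βp,
      (1/2) * σ^2 * deriv (deriv V) x + b x * deriv V x - lam * V x
        - (γ * deriv V x + 1)^2 / (4*η) = 0)
    (hV_bm : Tendsto V (𝓝[>] βm) atTop) (hV_bp : Tendsto V (𝓝[<] βp) atTop) :
    Tendsto (fun ε : ℝ => V (βm + ε) / (-Real.log ε)) (𝓝[>] (0:ℝ))
      (𝓝 (2*σ^2*η/γ^2)) ∧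
    Tendsto (fun ε : ℝ => V (βp - ε) / (-Real.log ε)) (𝓝[>] (0:ℝ))
      (𝓝 (2*σ^2*η/γ^2)) :=
  hjb_log_blowup_general βm βp σ η γ lam hβ hσ hη hγ hlam b hb_bdd hb_smooth V hV_smooth hV_hjb
    hV_bm hV_bp
end

section
/- Let β₋ < β₊ be real numbers, D = (β₋, β₊), and let σ, η, γ, λ > 0 be constants. Suppose b : D → ℝ is bounded, twice continuously differentiable, and Lipschitz continuous, and fix x₀ ∈ D. For a twice continuously differentiable function V : D → ℝ define W(x) = (γ/(2ησ²))·(γV(x) + x − (2η/γ)·∫_{x₀}^{x} b(y) dy), and define f(x) = −(γ/(σ⁴η))·b(x) + (1/σ²)·b'(x) + (1/σ⁴)·b(x)² + (γλ/(σ⁴η))·x − (2λ/σ⁴)·∫_{x₀}^{x} b(y) dy. Then V satisfies the reduced HJB equation (1/2)σ²V''(x) + b(x)V'(x) − λV(x) − (γV'(x) + 1)²/(4η) = 0 for all x ∈ D if and only if W satisfies −W''(x) + (W'(x))² + (2λ/σ²)·W(x) = f(x) for all x ∈ D. -/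
/-!
Write `c = γ/(2ησ²)`. Since `W = c(γV + x − (2η/γ)∫_{x₀}^x b)`, one gets `W' = c(γV' + 1) − b/σ²`
and `W'' = cγV'' − b'/σ²`; substituting, the Lasry–Lions residual `−W'' + W'² + (2λ/σ²)W − f`
is exactly `−γ²/(ησ⁴)` times the HJB residual of `V`, so one vanishes iff the other does.
-/

open Set MeasureTheory

section Transform

variable {s : Set ℝ} {V b W : ℝ → ℝ} {x₀ c γ k : ℝ}

theorem hasDerivAt_integral_of_continuousOn [s.OrdConnected] {E : Type*} [NormedAddCommGroup E]
    [NormedSpace ℝ E] [CompleteSpace E] {g : ℝ → E} (hs : IsOpen s) (hg : ContinuousOn g s)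
    (hx₀ : x₀ ∈ s) {x : ℝ} (hx : x ∈ s) :
    HasDerivAt (fun u => ∫ y in x₀..u, g y) (g x) x :=
  intervalIntegral.integral_hasDerivAt_right
    ((hg.mono (OrdConnected.uIcc_subset ‹_› hx₀ hx)).intervalIntegrable)
    (AEStronglyMeasurable.stronglyMeasurableAtFilter_of_mem
      (hg.aestronglyMeasurable hs.measurableSet) (hs.mem_nhds hx))
    (hg.continuousAt (hs.mem_nhds hx))

theorem eqOn_deriv_transform [s.OrdConnected] (hs : IsOpen s) (hx₀ : x₀ ∈ s)
    (hV : DifferentiableOn ℝ V s) (hb : ContinuousOn b s)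
    (hW : EqOn W (fun x => c * (γ * V x + x - k * ∫ y in x₀..x, b y)) s) :
    EqOn (deriv W) (fun x => c * (γ * deriv V x + 1 - k * b x)) s := by
  intro x hx
  rw [hW.deriv hs hx]
  have hVx : HasDerivAt V (deriv V x) x := (hV.differentiableAt (hs.mem_nhds hx)).hasDerivAt
  exact ((((hVx.const_mul γ).add (hasDerivAt_id x)).sub
    ((hasDerivAt_integral_of_continuousOn hs hb hx₀ hx).const_mul k)).const_mul c).deriv

theorem eqOn_deriv_deriv_transform [s.OrdConnected] (hs : IsOpen s) (hx₀ : x₀ ∈ s)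
    (hV : ContDiffOn ℝ 2 V s) (hb : ContDiffOn ℝ 1 b s)
    (hW : EqOn W (fun x => c * (γ * V x + x - k * ∫ y in x₀..x, b y)) s) :
    EqOn (deriv (deriv W)) (fun x => c * (γ * deriv (deriv V) x - k * deriv b x)) s := by
  intro x hx
  rw [(eqOn_deriv_transform hs hx₀ (hV.differentiableOn two_ne_zero) hb.continuousOn hW).deriv
    hs hx]
  have hV'x : HasDerivAt (deriv V) (deriv (deriv V) x) x :=
    (((hV.deriv_of_isOpen hs one_add_one_eq_two.le).differentiableOn one_ne_zero).differentiableAt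
      (hs.mem_nhds hx)).hasDerivAt
  have hbx : HasDerivAt b (deriv b x) x :=
    ((hb.differentiableOn one_ne_zero).differentiableAt (hs.mem_nhds hx)).hasDerivAt
  exact ((((hV'x.const_mul γ).add_const 1).sub (hbx.const_mul k)).const_mul c).deriv

end Transform

theorem hjb_iff_lasryLions {σ η γ lam x v v' v'' β β' ι : ℝ}
    (hσ : σ ≠ 0) (hη : η ≠ 0) (hγ : γ ≠ 0) :
    (1/2) * σ^2 * v'' + β * v' - lam * v - (γ * v' + 1)^2 / (4*η) = 0
    ↔ -(γ/(2*η*σ^2) * (γ * v'' - (2*η/γ) * β'))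
        + (γ/(2*η*σ^2) * (γ * v' + 1 - (2*η/γ) * β))^2
        + (2*lam/σ^2) * (γ/(2*η*σ^2) * (γ * v + x - (2*η/γ) * ι))
      = -(γ/(σ^4*η)) * β + (1/σ^2) * β' + (1/σ^4) * β^2
        + (γ*lam/(σ^4*η)) * x - (2*lam/σ^4) * ι := by
  have hresidual :
      -(γ/(2*η*σ^2) * (γ * v'' - (2*η/γ) * β'))
        + (γ/(2*η*σ^2) * (γ * v' + 1 - (2*η/γ) * β))^2
        + (2*lam/σ^2) * (γ/(2*η*σ^2) * (γ * v + x - (2*η/γ) * ι))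
      - (-(γ/(σ^4*η)) * β + (1/σ^2) * β' + (1/σ^4) * β^2
        + (γ*lam/(σ^4*η)) * x - (2*lam/σ^4) * ι)
      = -(γ^2/(η*σ^4)) * ((1/2) * σ^2 * v'' + β * v' - lam * v - (γ * v' + 1)^2 / (4*η)) := by
    field_simp
    ring
  have hmul : -(γ^2/(η*σ^4)) ≠ 0 := by simp [hσ, hη, hγ]
  rw [iff_comm, ← sub_eq_zero, hresidual, mul_eq_zero, or_iff_right hmul]

theorem hjb_transformation_general (βm βp σ η γ lam x₀ : ℝ)
    (hσ : 0 < σ) (hη : 0 < η) (hγ : 0 < γ)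
    (hx₀ : x₀ ∈ Ioo βm βp)
    (b : ℝ → ℝ)
    (hb_smooth : ContDiffOn ℝ 2 b (Ioo βm βp))
    (V W f : ℝ → ℝ)
    (hV_smooth : ContDiffOn ℝ 2 V (Ioo βm βp))
    (hW : ∀ x ∈ Ioo βm βp,
      W x = γ/(2*η*σ^2) * (γ * V x + x - (2*η/γ) * ∫ y in x₀..x, b y))
    (hf : ∀ x ∈ Ioo βm βp,
      f x = -(γ/(σ^4*η)) * b x + (1/σ^2) * deriv b x + (1/σ^4) * (b x)^2
        + (γ*lam/(σ^4*η)) * x - (2*lam/σ^4) * ∫ y in x₀..x, b y) :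
    (∀ x ∈ Ioo βm βp,
        (1/2) * σ^2 * deriv (deriv V) x + b x * deriv V x - lam * V x
          - (γ * deriv V x + 1)^2 / (4*η) = 0)
    ↔ (∀ x ∈ Ioo βm βp,
        -deriv (deriv W) x + (deriv W x)^2 + (2*lam/σ^2) * W x = f x) := by
  have hW' := eqOn_deriv_transform isOpen_Ioo hx₀
    (hV_smooth.differentiableOn two_ne_zero) hb_smooth.continuousOn hW
  have hW'' := eqOn_deriv_deriv_transform isOpen_Ioo hx₀ hV_smooth (hb_smooth.of_le one_le_two) hW
  refine forall₂_congr fun x hx => ?_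
  rw [hW'' hx, hW' hx, hW x hx, hf x hx]
  exact hjb_iff_lasryLions hσ.ne' hη.ne' hγ.ne'

/-- The transformation `W(x) = (γ/(2ησ²))(γV(x) + x − (2η/γ)∫_{x₀}^x b)` turns the reduced
HJB equation for `V` into the Lasry–Lions equation `−W'' + (W')² + (2λ/σ²)W = f` on `D`. -/
theorem hjb_transformation (βm βp σ η γ lam x₀ : ℝ) (hβ : βm < βp)
    (hσ : 0 < σ) (hη : 0 < η) (hγ : 0 < γ) (hlam : 0 < lam)
    (hx₀ : x₀ ∈ Ioo βm βp)
    (b : ℝ → ℝ)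
    (hb_bdd : ∃ C : ℝ, ∀ x ∈ Ioo βm βp, |b x| ≤ C)
    (hb_smooth : ContDiffOn ℝ 2 b (Ioo βm βp))
    (hb_lip : ∃ K : NNReal, LipschitzOnWith K b (Ioo βm βp))
    (V W f : ℝ → ℝ)
    (hV_smooth : ContDiffOn ℝ 2 V (Ioo βm βp))
    (hW : ∀ x ∈ Ioo βm βp,
      W x = γ/(2*η*σ^2) * (γ * V x + x - (2*η/γ) * ∫ y in x₀..x, b y))
    (hf : ∀ x ∈ Ioo βm βp,
      f x = -(γ/(σ^4*η)) * b x + (1/σ^2) * deriv b x + (1/σ^4) * (b x)^2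
        + (γ*lam/(σ^4*η)) * x - (2*lam/σ^4) * ∫ y in x₀..x, b y) :
    (∀ x ∈ Ioo βm βp,
        (1/2) * σ^2 * deriv (deriv V) x + b x * deriv V x - lam * V x
          - (γ * deriv V x + 1)^2 / (4*η) = 0)
    ↔ (∀ x ∈ Ioo βm βp,
        -deriv (deriv W) x + (deriv W x)^2 + (2*lam/σ^2) * W x = f x) :=
  hjb_transformation_general βm βp σ η γ lam x₀ hσ hη hγ hx₀ b hb_smooth V W f hV_smooth hW hf
end

section
/- Let β₋ < β₊ be real numbers, D = (β₋, β₊), let σ, η, γ, λ > 0 be constants, and let b : D → ℝ be bounded and continuous. Suppose V : D → ℝ is twice continuously differentiable, satisfies the reduced HJB equation (1/2)σ²V''(x) + b(x)V'(x) − λV(x) − (γV'(x) + 1)²/(4η) = 0 on D, and satisfies V(x) → +∞ as x approaches either endpoint of D from inside. Then V'(x) → −∞ as x → β₋ from the right and V'(x) → +∞ as x → β₊ from the left; equivalently, the feedback control û(x) = −(γV'(x) + 1)/(2η) satisfies û(x) → +∞ as x → β₋ from the right and û(x) → −∞ as x → β₊ from the left. -/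
open Set Filter Topology

/-!
Where `V` is large, the HJB equation forces `V'' > 0`: the quadratic term `(γV' + 1)²/(4η)`
dominates the drift term `bV'` with `b` bounded, and `λV` is large. Hence `V` is convex near
each endpoint, so `V'` is monotone there; if `V'` stayed bounded below at `β₋` (above at `β₊`),
`V` would stay bounded above there, contradicting `V → +∞`.
-/

theorem exists_mul_sub_sq_div_le {η γ : ℝ} (hη : 0 < η) (hγ : 0 < γ) (C : ℝ) :
    ∃ K, ∀ B p : ℝ, |B| ≤ C → B * p - (γ * p + 1) ^ 2 / (4 * η) ≤ K := by
  -- the maximum of `t ↦ C t - (γ t - 1)² / (4η)`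
  refine ⟨(2 * η * C + γ) ^ 2 / (4 * η * γ ^ 2), fun B p hB => ?_⟩
  have hBp : B * p ≤ C * |p| :=
    (le_abs_self _).trans (by rw [abs_mul]; exact mul_le_mul_of_nonneg_right hB (abs_nonneg p))
  have hsq : (γ * |p| - 1) ^ 2 ≤ (γ * p + 1) ^ 2 := by
    rcases abs_cases p with ⟨hp, hp0⟩ | ⟨hp, hp0⟩ <;> rw [hp] <;> nlinarith
  have hquad : (2 * η * C + γ) ^ 2 / (4 * η * γ ^ 2) - (C * |p| - (γ * |p| - 1) ^ 2 / (4 * η))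
      = ((γ ^ 2 * |p| - 2 * η * C - γ) ^ 2 + γ ^ 2) / (4 * η * γ ^ 2) := by
    field_simp; ring
  have hquad_nonneg :
      0 ≤ ((γ ^ 2 * |p| - 2 * η * C - γ) ^ 2 + γ ^ 2) / (4 * η * γ ^ 2) := by positivity
  have hsq_div : (γ * |p| - 1) ^ 2 / (4 * η) ≤ (γ * p + 1) ^ 2 / (4 * η) := by gcongr
  linarith

theorem exists_deriv_deriv_pos_of_hjb {s : Set ℝ} {σ η γ lam : ℝ} (hσ : σ ≠ 0) (hη : 0 < η)
    (hγ : 0 < γ) (hlam : 0 < lam) {b V : ℝ → ℝ} (hb : ∃ C, ∀ x ∈ s, |b x| ≤ C)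
    (hV : ∀ x ∈ s, (1/2) * σ^2 * deriv (deriv V) x + b x * deriv V x - lam * V x
        - (γ * deriv V x + 1)^2 / (4*η) = 0) :
    ∃ M, ∀ x ∈ s, M ≤ V x → 0 < deriv (deriv V) x := by
  obtain ⟨C, hC⟩ := hb
  obtain ⟨K, hK⟩ := exists_mul_sub_sq_div_le hη hγ C
  refine ⟨(K + 1) / lam, fun x hx hMx => ?_⟩
  have hKV : K < lam * V x := by rw [div_le_iff₀' hlam] at hMx; linarith
  have hpos : 0 < (1/2) * σ^2 * deriv (deriv V) x := by
    linarith [hV x hx, hK (b x) (deriv V x) (hC x hx)]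
  exact pos_of_mul_pos_right hpos (by positivity)

theorem tendsto_deriv_nhdsGT_atBot_of_monotoneOn {f : ℝ → ℝ} {a c : ℝ} (hac : a < c)
    (hf : DifferentiableOn ℝ f (Ioo a c)) (hf' : MonotoneOn (deriv f) (Ioo a c))
    (hfa : Tendsto f (𝓝[>] a) atTop) : Tendsto (deriv f) (𝓝[>] a) atBot := by
  rw [tendsto_atBot]
  intro L
  obtain ⟨x₀, hx₀, hx₀L⟩ : ∃ x₀ ∈ Ioo a c, deriv f x₀ ≤ L := by
    by_contra! hL
    obtain ⟨m, ham, hmc⟩ := exists_between hac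
    have hle : ∀ y ∈ Ioo a m, f y ≤ f m - L * (m - y) := fun y hy => by
      have := (convex_Ioo a c).mul_sub_le_image_sub_of_le_deriv hf.continuousOn
        (by rwa [interior_Ioo]) (C := L) (fun x hx => (hL x (by rwa [interior_Ioo] at hx)).le)
        y ⟨hy.1, hy.2.trans hmc⟩ m ⟨ham, hmc⟩ hy.2.le
      linarith
    have hlim : Tendsto (fun y => f m - L * (m - y)) (𝓝[>] a) (𝓝 (f m - L * (m - a))) :=
      (Continuous.tendsto (by fun_prop) a).mono_left nhdsWithin_le_nhds
    exact not_tendsto_atTop_of_tendsto_nhds hlim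
      (tendsto_atTop_mono' _ (eventually_of_mem (Ioo_mem_nhdsGT ham) hle) hfa)
  filter_upwards [Ioo_mem_nhdsGT hx₀.1] with x hx
  exact (hf' ⟨hx.1, hx.2.trans hx₀.2⟩ hx₀ hx.2.le).trans hx₀L

theorem tendsto_deriv_nhdsGT_atBot {f : ℝ → ℝ} {a : ℝ}
    (hf : ∀ᶠ x in 𝓝[>] a,
      DifferentiableAt ℝ f x ∧ DifferentiableAt ℝ (deriv f) x ∧ 0 ≤ deriv (deriv f) x)
    (hfa : Tendsto f (𝓝[>] a) atTop) : Tendsto (deriv f) (𝓝[>] a) atBot := by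
  obtain ⟨c, hac, hc⟩ := mem_nhdsGT_iff_exists_Ioo_subset.mp hf
  refine tendsto_deriv_nhdsGT_atBot_of_monotoneOn hac
    (fun x hx => (hc hx).1.differentiableWithinAt) ?_ hfa
  refine monotoneOn_of_deriv_nonneg (convex_Ioo a c)
    (fun x hx => (hc hx).2.1.continuousAt.continuousWithinAt) ?_ ?_ <;> rw [interior_Ioo]
  · exact fun x hx => (hc hx).2.1.differentiableWithinAt
  · exact fun x hx => (hc hx).2.2

theorem tendsto_deriv_nhdsLT_atTop {f : ℝ → ℝ} {b : ℝ}
    (hf : ∀ᶠ x in 𝓝[<] b,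
      DifferentiableAt ℝ f x ∧ DifferentiableAt ℝ (deriv f) x ∧ 0 ≤ deriv (deriv f) x)
    (hfb : Tendsto f (𝓝[<] b) atTop) : Tendsto (deriv f) (𝓝[<] b) atTop := by
  have hg' : deriv (fun x => f (-x)) = fun x => -deriv f (-x) := funext (deriv_comp_neg f)
  have hg'' : ∀ x, deriv (deriv (fun x => f (-x))) x = deriv (deriv f) (-x) := fun x => by
    rw [hg', deriv.fun_neg, deriv_comp_neg, neg_neg]
  have hflip : Tendsto (fun x => -deriv f (-x)) (𝓝[>] (-b)) atBot := by
    rw [← hg']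
    refine tendsto_deriv_nhdsGT_atBot ?_ (hfb.comp tendsto_neg_nhdsGT_neg)
    filter_upwards [tendsto_neg_nhdsGT_neg.eventually hf] with x ⟨h1, h2, h3⟩
    refine ⟨h1.comp x differentiableAt_id.neg, ?_, by rwa [hg'']⟩
    rw [hg']
    exact (h2.comp x differentiableAt_id.neg).neg
  simpa [Function.comp_def] using (tendsto_neg_atBot_atTop.comp hflip).comp tendsto_neg_nhdsLT

noncomputable def feedbackControl (η γ p : ℝ) : ℝ := -(γ * p + 1) / (2 * η)

theorem tendsto_feedbackControl_atTop {α : Type*} {l : Filter α} {p : α → ℝ} {η γ : ℝ}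
    (hη : 0 < η) (hγ : 0 < γ) (hp : Tendsto p l atBot) :
    Tendsto (fun x => feedbackControl η γ (p x)) l atTop :=
  (tendsto_neg_atBot_atTop.comp
    (tendsto_atBot_add_const_right _ 1 (hp.const_mul_atBot hγ))).atTop_div_const (by positivity)

theorem tendsto_feedbackControl_atBot {α : Type*} {l : Filter α} {p : α → ℝ} {η γ : ℝ}
    (hη : 0 < η) (hγ : 0 < γ) (hp : Tendsto p l atTop) :
    Tendsto (fun x => feedbackControl η γ (p x)) l atBot :=
  (tendsto_neg_atTop_atBot.comp
    (tendsto_atTop_add_const_right _ 1 (hp.const_mul_atTop hγ))).atBot_div_const (by positivity)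

theorem feedback_blowup_general (βm βp σ η γ lam : ℝ) (hβ : βm < βp)
    (hσ : 0 < σ) (hη : 0 < η) (hγ : 0 < γ) (hlam : 0 < lam)
    (b : ℝ → ℝ)
    (hb_bdd : ∃ C : ℝ, ∀ x ∈ Ioo βm βp, |b x| ≤ C)
    (V : ℝ → ℝ)
    (hV_smooth : ContDiffOn ℝ 2 V (Ioo βm βp))
    (hV_hjb : ∀ x ∈ Ioo βm βp,
      (1/2) * σ^2 * deriv (deriv V) x + b x * deriv V x - lam * V x
        - (γ * deriv V x + 1)^2 / (4*η) = 0)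
    (hV_bm : Tendsto V (𝓝[>] βm) atTop) (hV_bp : Tendsto V (𝓝[<] βp) atTop) :
    (Tendsto (deriv V) (𝓝[>] βm) atBot ∧ Tendsto (deriv V) (𝓝[<] βp) atTop)
    ∧ (Tendsto (fun x => -(γ * deriv V x + 1)/(2*η)) (𝓝[>] βm) atTop ∧
       Tendsto (fun x => -(γ * deriv V x + 1)/(2*η)) (𝓝[<] βp) atBot) := by
  obtain ⟨M, hM⟩ := exists_deriv_deriv_pos_of_hjb hσ.ne' hη hγ hlam hb_bdd hV_hjb
  have hV' : ContDiffOn ℝ 1 (deriv V) (Ioo βm βp) :=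
    ((contDiffOn_succ_iff_deriv_of_isOpen (n := 1) isOpen_Ioo).1 hV_smooth).2.2
  have hconvex : ∀ x ∈ Ioo βm βp, M ≤ V x →
      DifferentiableAt ℝ V x ∧ DifferentiableAt ℝ (deriv V) x ∧ 0 ≤ deriv (deriv V) x :=
    fun x hx hMx =>
      ⟨(hV_smooth.differentiableOn two_ne_zero).differentiableAt (isOpen_Ioo.mem_nhds hx),
        (hV'.differentiableOn one_ne_zero).differentiableAt (isOpen_Ioo.mem_nhds hx),
        (hM x hx hMx).le⟩
  have hleft : Tendsto (deriv V) (𝓝[>] βm) atBot := tendsto_deriv_nhdsGT_atBot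
    (by filter_upwards [Ioo_mem_nhdsGT hβ, hV_bm.eventually_ge_atTop M] using hconvex) hV_bm
  have hright : Tendsto (deriv V) (𝓝[<] βp) atTop := tendsto_deriv_nhdsLT_atTop
    (by filter_upwards [Ioo_mem_nhdsLT hβ, hV_bp.eventually_ge_atTop M] using hconvex) hV_bp
  exact ⟨⟨hleft, hright⟩, tendsto_feedbackControl_atTop hη hγ hleft,
    tendsto_feedbackControl_atBot hη hγ hright⟩

/-- If `V` solves the reduced HJB equation on `D` and blows up at both endpoints, then
`V'(x) → −∞` as `x → β₋⁺` and `V'(x) → +∞` as `x → β₊⁻`; equivalently, the feedback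
control `û(x) = −(γV'(x)+1)/(2η)` satisfies `û(x) → +∞` as `x → β₋⁺` and
`û(x) → −∞` as `x → β₊⁻`. -/
theorem feedback_blowup (βm βp σ η γ lam : ℝ) (hβ : βm < βp)
    (hσ : 0 < σ) (hη : 0 < η) (hγ : 0 < γ) (hlam : 0 < lam)
    (b : ℝ → ℝ)
    (hb_bdd : ∃ C : ℝ, ∀ x ∈ Ioo βm βp, |b x| ≤ C)
    (hb_cont : ContinuousOn b (Ioo βm βp))
    (V : ℝ → ℝ)
    (hV_smooth : ContDiffOn ℝ 2 V (Ioo βm βp))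
    (hV_hjb : ∀ x ∈ Ioo βm βp,
      (1/2) * σ^2 * deriv (deriv V) x + b x * deriv V x - lam * V x
        - (γ * deriv V x + 1)^2 / (4*η) = 0)
    (hV_bm : Tendsto V (𝓝[>] βm) atTop) (hV_bp : Tendsto V (𝓝[<] βp) atTop) :
    (Tendsto (deriv V) (𝓝[>] βm) atBot ∧ Tendsto (deriv V) (𝓝[<] βp) atTop)
    ∧ (Tendsto (fun x => -(γ * deriv V x + 1)/(2*η)) (𝓝[>] βm) atTop ∧
       Tendsto (fun x => -(γ * deriv V x + 1)/(2*η)) (𝓝[<] βp) atBot) :=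
  feedback_blowup_general βm βp σ η γ lam hβ hσ hη hγ hlam b hb_bdd V hV_smooth hV_hjb hV_bm hV_bp
end
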